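/- Let Ω ⊆ ℝ^m be an open convex set and let f be holomorphic on the tube T_Ω = ℝ^m + iΩ and bounded on T_{Ω'} for every open Ω' with compact closure contained in Ω. If there exists y₀ ∈ Ω such that the function x ↦ f(x + iy₀) is almost periodic on ℝ^m, then f is almost periodic on T_Ω. -/

import Mathlib

/-!
If the translates `f (· + t)` and `f (· + s)` are `δ`-close on the hyperplane `Im z = y₀`, their
difference is holomorphic and bounded by `2M` on a relatively compact convex subtube `T_U`
with `y₀ ∈ U`. When `Im z = (1 - u) y₀ + u y₂` with `y₂ ∈ U`, Hadamard's three lines theorem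
on the complex line through `z` in the direction `i (y₂ - y₀)` bounds the difference at `z` by
`δ ^ (1 - u) * (2M) ^ u`. By compactness a single `u < 1` serves every `Im z ∈ closure Ω'`, so
uniform closeness on the hyperplane forces uniform closeness on `T_{Ω'}`, and total boundedness
of the translates passes from the hyperplane to `T_{Ω'}`.
-/

open MeasureTheory Filter Topology Complex UniformConvergence

noncomputable section

/-- Embedding of a real vector as a complex vector (real parts). -/
def embR {m : ℕ} (t : Fin m → ℝ) : Fin m → ℂ := fun j => (t j : ℂ)

/-- The tube domain `T_Ω = ℝ^m + iΩ` over a base `Ω ⊆ ℝ^m`. -/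
def tube {m : ℕ} (Ω : Set (Fin m → ℝ)) : Set (Fin m → ℂ) :=
  {z | (fun j => (z j).im) ∈ Ω}

/-- Bohr almost periodicity for a continuous map `ℝ^m → X`: the set of translates is
relatively compact in the topology of uniform convergence on `ℝ^m`. -/
def AlmostPeriodic {m : ℕ} {X : Type*} [MetricSpace X] (g : (Fin m → ℝ) → X) : Prop :=
  Continuous g ∧
  IsCompact (closure {h : (Fin m → ℝ) →ᵤ X |
    ∃ t : Fin m → ℝ, h = UniformFun.ofFun fun x => g (x + t)})

/-- Almost periodicity on the tube `T_Ω`: for every open `Ω'` with compact closure contained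
in `Ω`, the set of translates is relatively compact in the topology of uniform convergence
on `T_{Ω'}`. -/
def APOnTube {m : ℕ} {X : Type*} [MetricSpace X]
    (f : (Fin m → ℂ) → X) (Ω : Set (Fin m → ℝ)) : Prop :=
  ContinuousOn f (tube Ω) ∧
  ∀ Ω' : Set (Fin m → ℝ), IsOpen Ω' → IsCompact (closure Ω') → closure Ω' ⊆ Ω →
    IsCompact (closure {h : ↥(tube Ω') →ᵤ X |
      ∃ t : Fin m → ℝ, h = UniformFun.ofFun fun z : ↥(tube Ω') => f (↑z + embR t)})

/-- Holomorphic almost periodic function on the tube `T_Ω`. -/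
def HolomorphicAP {m : ℕ} (f : (Fin m → ℂ) → ℂ) (Ω : Set (Fin m → ℝ)) : Prop :=
  DifferentiableOn ℂ f (tube Ω) ∧ APOnTube f Ω

open Set AffineMap Metric Complex.HadamardThreeLines
open scoped Uniformity

lemma norm_le_interp_of_differentiableOn_verticalClosedStrip {E : Type*}
    [NormedAddCommGroup E] [NormedSpace ℂ E] {g : ℂ → E} {M δ u : ℝ}
    (hg : DifferentiableOn ℂ g (verticalClosedStrip 0 1))
    (hM : ∀ ζ ∈ verticalClosedStrip 0 1, ‖g ζ‖ ≤ M) (hδ : ∀ ζ : ℂ, ζ.re = 0 → ‖g ζ‖ ≤ δ)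
    (hu : u ∈ Icc (0 : ℝ) 1) : ‖g u‖ ≤ δ ^ (1 - u) * M ^ u := by
  have hstrip : verticalStrip 0 1 ⊆ verticalClosedStrip 0 1 := fun ζ hζ => ⟨hζ.1.le, hζ.2.le⟩
  have hclosure : closure (verticalStrip 0 1) ⊆ verticalClosedStrip 0 1 :=
    closure_minimal hstrip (isClosed_Icc.preimage continuous_re)
  simpa using norm_le_interp_of_mem_verticalClosedStrip₀₁' g (z := u)
    (by simpa [verticalClosedStrip] using hu)
    ⟨hg.mono hstrip, hg.continuousOn.mono hclosure⟩ ⟨M, by rintro - ⟨ζ, hζ, rfl⟩; exact hM ζ hζ⟩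
    hδ fun ζ hζ => hM ζ (by simp_all [verticalClosedStrip])

section Geometry

variable {E : Type*} [NormedAddCommGroup E] [NormedSpace ℝ E]

lemma thickening_convexHull (δ : ℝ) (s : Set E) :
    thickening δ (convexHull ℝ s) = convexHull ℝ (thickening δ s) := by
  rw [← add_ball_zero, ← add_ball_zero, convexHull_add, (convex_ball 0 δ).convexHull_eq]

lemma exists_isOpen_convex_between [ProperSpace E] {K Ω : Set E} (hK : IsCompact K)
    (hΩ : IsOpen Ω) (hΩc : Convex ℝ Ω) (hKΩ : K ⊆ Ω) :
    ∃ U, IsOpen U ∧ Convex ℝ U ∧ K ⊆ U ∧ IsCompact (closure U) ∧ closure U ⊆ Ω := by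
  obtain ⟨η, hη, hηΩ⟩ := hK.exists_thickening_subset_open hΩ hKΩ
  refine ⟨thickening (η / 2) (convexHull ℝ K), isOpen_thickening,
    (convex_convexHull ℝ K).thickening _,
    (subset_convexHull ℝ K).trans (self_subset_thickening (half_pos hη) _),
    (isBounded_convexHull.2 hK.isBounded).thickening.isCompact_closure, ?_⟩
  calc closure (thickening (η / 2) (convexHull ℝ K))
      ⊆ cthickening (η / 2) (convexHull ℝ K) := closure_thickening_subset_cthickening _ _
    _ ⊆ thickening η (convexHull ℝ K) := cthickening_subset_thickening' hη (half_lt_self hη) _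
    _ = convexHull ℝ (thickening η K) := thickening_convexHull _ _
    _ ⊆ Ω := convexHull_min hηΩ hΩc

lemma IsCompact.exists_one_lt_mapsTo_homothety {K U : Set E} (hK : IsCompact K)
    (hU : IsOpen U) (hKU : K ⊆ U) (c : E) : ∃ r > (1 : ℝ), MapsTo (homothety c r) K U := by
  have hcont : Continuous fun p : ℝ × E => homothety c p.1 p.2 := by
    simp only [homothety_apply, vsub_eq_sub, vadd_eq_add]
    fun_prop
  have hnear : ∀ᶠ r in 𝓝 (1 : ℝ), ∀ y ∈ K, homothety c r y ∈ U :=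
    hK.eventually_forall_of_forall_eventually fun y hy =>
      hcont.continuousAt.eventually_mem (hU.mem_nhds (by simpa using hKU hy))
  obtain ⟨r, hrU, hr⟩ := ((hnear.filter_mono nhdsWithin_le_nhds).and
    (self_mem_nhdsWithin : Ioi (1 : ℝ) ∈ 𝓝[>] 1)).exists
  exact ⟨r, hr, hrU⟩

lemma lineMap_homothety_inv {r : ℝ} (hr : r ≠ 0) (c y : E) :
    lineMap c (homothety c r y) r⁻¹ = y := by
  rw [← homothety_eq_lineMap, ← homothety_mul_apply, inv_mul_cancel₀ hr, homothety_one,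
    AffineMap.id_apply]

end Geometry

lemma TotallyBounded.range_of_forall_uniformity {ι α β : Type*} [UniformSpace α]
    [UniformSpace β] {A : ι → α} {B : ι → β} (hA : TotallyBounded (range A))
    (hAB : ∀ V ∈ 𝓤 β, ∃ W ∈ 𝓤 α, ∀ i j, (A i, A j) ∈ W → (B i, B j) ∈ V) :
    TotallyBounded (range B) := by
  intro V hV
  obtain ⟨W, hW, hWV⟩ := hAB V hV
  obtain ⟨T, hTA, hTfin, hT⟩ := totallyBounded_iff_subset.1 hA W hW
  obtain ⟨S, rfl, hS⟩ := exists_image_eq_injOn_of_subset_range hTA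
  refine ⟨B '' S, (hTfin.of_finite_image hS).image B, ?_⟩
  rintro - ⟨i, rfl⟩
  obtain ⟨-, ⟨j, hj, rfl⟩, hij⟩ := mem_iUnion₂.1 (hT ⟨i, rfl⟩)
  exact mem_iUnion₂.2 ⟨B j, mem_image_of_mem B hj, hWV i j hij⟩

lemma totallyBounded_range_ofFun_of_dist {ι α β X Y : Type*} [PseudoMetricSpace X]
    [PseudoMetricSpace Y] {A : ι → α → X} {B : ι → β → Y}
    (hA : TotallyBounded (range fun i => UniformFun.ofFun (A i)))
    (hAB : ∀ ε > 0, ∃ δ > 0, ∀ i j, (∀ a, dist (A i a) (A j a) < δ) →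
      ∀ b, dist (B i b) (B j b) < ε) :
    TotallyBounded (range fun i => UniformFun.ofFun (B i)) := by
  refine hA.range_of_forall_uniformity fun V hV => ?_
  obtain ⟨ε, hε, hεV⟩ :=
    (UniformFun.hasBasis_uniformity_of_basis β Y Metric.uniformity_basis_dist).mem_iff.1 hV
  obtain ⟨δ, hδ, hδε⟩ := hAB ε hε
  exact ⟨_, (UniformFun.hasBasis_uniformity_of_basis α X Metric.uniformity_basis_dist).mem_of_mem
    hδ, fun i j h => hεV (hδε i j h)⟩

lemma exists_pos_rpow_mul_lt {p ε : ℝ} (hp : 0 < p) (C : ℝ) (hε : 0 < ε) :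
    ∃ δ > 0, δ ^ p * C < ε := by
  have hlim : Tendsto (fun δ : ℝ => δ ^ p * C) (𝓝[>] 0) (𝓝 0) := by
    simpa [Real.zero_rpow hp.ne'] using
      ((Real.continuousAt_rpow_const 0 p (Or.inr hp.le)).tendsto.mul_const C).mono_left
        nhdsWithin_le_nhds
  obtain ⟨δ, hδε, hδ⟩ := ((hlim.eventually (gt_mem_nhds hε)).and self_mem_nhdsWithin).exists
  exact ⟨δ, hδ, hδε⟩

section Tube

variable {m : ℕ}

lemma im_add_embR (z : Fin m → ℂ) (t : Fin m → ℝ) :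
    (fun j => ((z + embR t) j).im) = fun j => (z j).im := by
  funext j
  simp [embR]

lemma im_add_smul_I_embR (z : Fin m → ℂ) (ζ : ℂ) (y : Fin m → ℝ) :
    (fun j => ((z + ζ • (I • embR y)) j).im) = (fun j => (z j).im) + ζ.re • y := by
  funext j
  simp [embR]

lemma add_embR_mem_tube {U : Set (Fin m → ℝ)} {z : Fin m → ℂ} (hz : z ∈ tube U)
    (t : Fin m → ℝ) : z + embR t ∈ tube U := by
  show (fun j => ((z + embR t) j).im) ∈ U
  rwa [im_add_embR]

lemma add_embR_eq_of_im_eq {z : Fin m → ℂ} {y : Fin m → ℝ} (hz : (fun j => (z j).im) = y)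
    (t : Fin m → ℝ) :
    z + embR t = fun j => (((fun j => (z j).re) + t) j : ℂ) + (y j : ℂ) * I := by
  subst hz
  funext j
  apply Complex.ext <;> simp [embR]

lemma DifferentiableOn.comp_add_embR {U : Set (Fin m → ℝ)} {f : (Fin m → ℂ) → ℂ}
    (hf : DifferentiableOn ℂ f (tube U)) (t : Fin m → ℝ) :
    DifferentiableOn ℂ (fun w => f (w + embR t)) (tube U) :=
  hf.comp (differentiableOn_id.add_const _) fun _ hw => add_embR_mem_tube hw t

lemma norm_le_interp_of_mem_tube {U : Set (Fin m → ℝ)} (hU : Convex ℝ U)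
    {F : (Fin m → ℂ) → ℂ} (hF : DifferentiableOn ℂ F (tube U)) {M δ u : ℝ}
    (hM : ∀ z ∈ tube U, ‖F z‖ ≤ M) {y₀ y₂ : Fin m → ℝ} (hy₀ : y₀ ∈ U) (hy₂ : y₂ ∈ U)
    (hδ : ∀ z : Fin m → ℂ, (fun j => (z j).im) = y₀ → ‖F z‖ ≤ δ) (hu : u ∈ Icc (0 : ℝ) 1)
    {z : Fin m → ℂ} (hz : (fun j => (z j).im) = lineMap y₀ y₂ u) :
    ‖F z‖ ≤ δ ^ (1 - u) * M ^ u := by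
  set L : ℂ → Fin m → ℂ := fun ζ => z + (ζ - u) • (I • embR (y₂ - y₀))
  have hL : ∀ ζ, (fun j => (L ζ j).im) = lineMap y₀ y₂ ζ.re := by
    intro ζ
    rw [im_add_smul_I_embR, hz]
    simp only [lineMap_apply_module', sub_re, ofReal_re]
    module
  have hLtube : MapsTo L (verticalClosedStrip 0 1) (tube U) := fun ζ hζ => by
    show _ ∈ U
    rw [hL]
    exact hU.lineMap_mem hy₀ hy₂ hζ
  have hLdiff : Differentiable ℂ L := by fun_prop
  simpa [L] using norm_le_interp_of_differentiableOn_verticalClosedStrip (g := F ∘ L)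
    (hF.comp hLdiff.differentiableOn hLtube) (fun ζ hζ => hM _ (hLtube hζ))
    (fun ζ hζ => hδ _ (by rw [hL, hζ, lineMap_apply_zero])) hu

lemma dist_translates_le_of_hyperplane {U : Set (Fin m → ℝ)} (hU : Convex ℝ U)
    {f : (Fin m → ℂ) → ℂ} (hf : DifferentiableOn ℂ f (tube U)) {M δ u : ℝ}
    (hM : ∀ z ∈ tube U, ‖f z‖ ≤ M) {y₀ y₂ : Fin m → ℝ} (hy₀ : y₀ ∈ U) (hy₂ : y₂ ∈ U)
    (hu : u ∈ Icc (0 : ℝ) 1) {t s : Fin m → ℝ}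
    (hts : ∀ x : Fin m → ℝ, dist (f fun j => ((x + t) j : ℂ) + (y₀ j : ℂ) * I)
      (f fun j => ((x + s) j : ℂ) + (y₀ j : ℂ) * I) ≤ δ)
    {z : Fin m → ℂ} (hz : (fun j => (z j).im) = lineMap y₀ y₂ u) :
    dist (f (z + embR t)) (f (z + embR s)) ≤ δ ^ (1 - u) * (2 * M) ^ u := by
  rw [dist_eq_norm]
  refine norm_le_interp_of_mem_tube hU ((hf.comp_add_embR t).sub (hf.comp_add_embR s))
    (fun w hw => ?_) hy₀ hy₂ (fun w hw => ?_) hu hz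
  · calc ‖f (w + embR t) - f (w + embR s)‖ ≤ ‖f (w + embR t)‖ + ‖f (w + embR s)‖ :=
          norm_sub_le _ _
      _ ≤ 2 * M := by
          linarith [hM _ (add_embR_mem_tube hw t), hM _ (add_embR_mem_tube hw s)]
  · rw [Pi.sub_apply, ← dist_eq_norm, add_embR_eq_of_im_eq hw, add_embR_eq_of_im_eq hw]
    exact hts _

lemma AlmostPeriodic.totallyBounded_range {X : Type*} [MetricSpace X]
    {g : (Fin m → ℝ) → X} (hg : AlmostPeriodic g) :
    TotallyBounded (range fun t => UniformFun.ofFun fun x => g (x + t)) := by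
  refine hg.2.totallyBounded.subset ?_
  rintro - ⟨t, rfl⟩
  exact subset_closure ⟨t, rfl⟩

end Tube

/-- a holomorphic function on a tube domain, bounded on every relatively
compact subtube, which is almost periodic on one horizontal hyperplane `ℝ^m + iy₀`, is
almost periodic on the whole tube. -/
theorem ap_on_one_hyperplane_implies_ap_on_tube
    {m : ℕ} (Ω : Set (Fin m → ℝ)) (hΩo : IsOpen Ω) (hΩconv : Convex ℝ Ω)
    (f : (Fin m → ℂ) → ℂ) (hf : DifferentiableOn ℂ f (tube Ω))
    (hbd : ∀ Ω' : Set (Fin m → ℝ), IsOpen Ω' → IsCompact (closure Ω') → closure Ω' ⊆ Ω →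
      ∃ M : ℝ, ∀ z ∈ tube Ω', ‖f z‖ ≤ M)
    (y₀ : Fin m → ℝ) (hy₀ : y₀ ∈ Ω)
    (hap : AlmostPeriodic fun x : Fin m → ℝ =>
      f fun j => (x j : ℂ) + (y₀ j : ℂ) * Complex.I) :
    APOnTube f Ω := by
  refine ⟨hf.continuousOn, fun Ω' _ hΩ'c hΩ'Ω => ?_⟩
  obtain ⟨U, hUo, hUconv, hKU, hUc, hUΩ⟩ :=
    exists_isOpen_convex_between (hΩ'c.insert y₀) hΩo hΩconv (insert_subset hy₀ hΩ'Ω)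
  obtain ⟨r, hr, hrU⟩ :=
    hΩ'c.exists_one_lt_mapsTo_homothety hUo ((subset_insert _ _).trans hKU) y₀
  obtain ⟨M, hM⟩ := hbd U hUo hUc hUΩ
  have hfU : DifferentiableOn ℂ f (tube U) := hf.mono fun z hz => hUΩ (subset_closure hz)
  have hu : r⁻¹ ∈ Icc (0 : ℝ) 1 := mem_Icc.2 ⟨by positivity, inv_le_one_of_one_le₀ hr.le⟩
  have htb : TotallyBounded (range fun t : Fin m → ℝ =>
      UniformFun.ofFun fun z : ↥(tube Ω') => f (↑z + embR t)) := by
    refine totallyBounded_range_ofFun_of_dist hap.totallyBounded_range fun ε hε => ?_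
    obtain ⟨δ, hδ, hδε⟩ := exists_pos_rpow_mul_lt (sub_pos.2 (inv_lt_one_of_one_lt₀ hr))
      ((2 * M) ^ r⁻¹) hε
    exact ⟨δ, hδ, fun t s hts z => (dist_translates_le_of_hyperplane hUconv hfU hM
      (hKU (mem_insert _ _)) (hrU (subset_closure z.2)) hu (fun x => (hts x).le)
      (lineMap_homothety_inv (by positivity) _ _).symm).trans_lt hδε⟩
  refine (htb.subset ?_).closure.isCompact_of_isClosed isClosed_closure
  rintro - ⟨t, rfl⟩
  exact ⟨t, rfl⟩
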